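/- Let t < T and x ∈ ℝ, and let g : [t,T] → ℝ be continuous. Then g satisfies the integral equation g(s) = x + αβ∫_t^s e^{−β(v−t)} dv − 2β∫_t^s g(v) dv − bσ²∫_t^s (∫_v^T e^{−β(v₁−t)} dv₁) dv − 2cσ²∫_t^s (∫_v^T g(v₁) dv₁) dv for all s ∈ [t,T] if and only if g is twice continuously differentiable on [t,T] and satisfies g''(s) = −αβ²e^{−β(s−t)} − 2βg'(s) + bσ²e^{−β(s−t)} + 2cσ²g(s) for all s ∈ [t,T], together with the boundary conditions g(t) = x and g'(t) = αβ − 2βx − bσ²∫_t^T e^{−β(v₁−t)} dv₁ − 2cσ²∫_t^T g(v₁) dv₁. -/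

import Mathlib

/-!
Write the right-hand side of the integral equation as `x + ∫ₜˢ F(g)(v) dv`, where
`F(g)(v) = αβ e(v) − 2β g(v) − bσ² ∫ᵥᵀ e − 2cσ² ∫ᵥᵀ g`. By the fundamental theorem of calculus
the integral equation says exactly that `g(t) = x` and `g' = F(g)` on `[t, T]`. Differentiating
`F(g)` once more gives the second-order equation; conversely, `g'` and `F(g)` then satisfy the
same first-order equation with the same value at `t`, so they agree by the mean value theorem.
-/

open Set intervalIntegral

section Calculus

variable {a b : ℝ} {f φ ψ : ℝ → ℝ}

theorem ContinuousOn.hasDerivWithinAt_integral_Icc_right (hf : ContinuousOn f (Icc a b))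
    {s : ℝ} (hs : s ∈ Icc a b) :
    HasDerivWithinAt (fun u => ∫ v in a..u, f v) (f s) (Icc a b) s := by
  have : Fact (s ∈ Icc a b) := ⟨hs⟩
  exact integral_hasDerivWithinAt_right
    (hf.mono (uIcc_subset_Icc (left_mem_Icc.2 (hs.1.trans hs.2)) hs)).intervalIntegrable
    (hf.stronglyMeasurableAtFilter_nhdsWithin measurableSet_Icc s) (hf s hs)

theorem ContinuousOn.hasDerivWithinAt_integral_Icc_left (hf : ContinuousOn f (Icc a b))
    {s : ℝ} (hs : s ∈ Icc a b) :
    HasDerivWithinAt (fun u => ∫ v in u..b, f v) (-f s) (Icc a b) s := by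
  have : Fact (s ∈ Icc a b) := ⟨hs⟩
  exact integral_hasDerivWithinAt_left
    (hf.mono (uIcc_subset_Icc hs (right_mem_Icc.2 (hs.1.trans hs.2)))).intervalIntegrable
    (hf.stronglyMeasurableAtFilter_nhdsWithin measurableSet_Icc s) (hf s hs)

theorem eqOn_Icc_of_hasDerivWithinAt_eq
    (hφ : ∀ s ∈ Icc a b, HasDerivWithinAt φ (f s) (Icc a b) s)
    (hψ : ∀ s ∈ Icc a b, HasDerivWithinAt ψ (f s) (Icc a b) s) (ha : φ a = ψ a) :
    EqOn φ ψ (Icc a b) := by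
  have hasDerivWithinAt_Ici {χ : ℝ → ℝ}
      (hχ : ∀ s ∈ Icc a b, HasDerivWithinAt χ (f s) (Icc a b) s) :
      ∀ s ∈ Ico a b, HasDerivWithinAt χ (f s) (Ici s) s := fun s hs =>
    (hχ s (Ico_subset_Icc_self hs)).mono_of_mem_nhdsWithin (Icc_mem_nhdsGE_of_mem hs)
  exact eq_of_has_deriv_right_eq (hasDerivWithinAt_Ici hφ) (hasDerivWithinAt_Ici hψ)
    (fun s hs => (hφ s hs).continuousWithinAt) (fun s hs => (hψ s hs).continuousWithinAt) ha

theorem eqOn_Icc_iff_hasDerivWithinAt (hab : a ≤ b)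
    (hψ : ∀ s ∈ Icc a b, HasDerivWithinAt ψ (f s) (Icc a b) s) :
    (∀ s ∈ Icc a b, φ s = ψ s) ↔
      φ a = ψ a ∧ ∀ s ∈ Icc a b, HasDerivWithinAt φ (f s) (Icc a b) s :=
  ⟨fun h => ⟨h a (left_mem_Icc.2 hab), fun s hs => (hψ s hs).congr_of_mem h hs⟩,
    fun ⟨ha, hφ⟩ => eqOn_Icc_of_hasDerivWithinAt_eq hφ hψ ha⟩

theorem contDiffOn_succ_of_hasDerivWithinAt {s : Set ℝ} {f' : ℝ → ℝ} {n : ℕ}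
    (hs : UniqueDiffOn ℝ s) (hf : ∀ x ∈ s, HasDerivWithinAt f (f' x) s x)
    (hf' : ContDiffOn ℝ n f' s) : ContDiffOn ℝ (n + 1) f s :=
  (contDiffOn_succ_iff_derivWithin hs).2 ⟨fun x hx => (hf x hx).differentiableWithinAt,
    by simp, hf'.congr fun x hx => (hf x hx).derivWithin (hs x hx)⟩

end Calculus

section IntegroDifferential

variable {a b p q A B x : ℝ} {f f' g : ℝ → ℝ}

/-- The integral equation reads `g(s) = x + ∫ₐˢ firstOrderRHS b p q A B f g`. -/
noncomputable def firstOrderRHS (b p q A B : ℝ) (f g : ℝ → ℝ) (v : ℝ) : ℝ :=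
  p * f v - A * g v - q * (∫ w in v..b, f w) - B * ∫ w in v..b, g w

theorem hasDerivWithinAt_firstOrderRHS (hf : ContinuousOn f (Icc a b))
    (hg : ContinuousOn g (Icc a b)) {s f's g's : ℝ} (hs : s ∈ Icc a b)
    (hfs : HasDerivWithinAt f f's (Icc a b) s) (hgs : HasDerivWithinAt g g's (Icc a b) s) :
    HasDerivWithinAt (firstOrderRHS b p q A B f g) (p * f's - A * g's + q * f s + B * g s)
      (Icc a b) s :=
  ((((hfs.const_mul p).sub (hgs.const_mul A)).sub
    ((hf.hasDerivWithinAt_integral_Icc_left hs).const_mul q)).sub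
    ((hg.hasDerivWithinAt_integral_Icc_left hs).const_mul B)).congr_deriv (by ring)

theorem integralEquation_iff_firstOrderEquation (hab : a ≤ b) (hf : ContinuousOn f (Icc a b))
    (hg : ContinuousOn g (Icc a b)) :
    (∀ s ∈ Icc a b, g s = x + p * (∫ v in a..s, f v) - A * (∫ v in a..s, g v)
        - q * (∫ v in a..s, ∫ w in v..b, f w) - B * (∫ v in a..s, ∫ w in v..b, g w)) ↔
      g a = x ∧
        ∀ s ∈ Icc a b, HasDerivWithinAt g (firstOrderRHS b p q A B f g s) (Icc a b) s := by
  have tail_continuousOn {h : ℝ → ℝ} (hh : ContinuousOn h (Icc a b)) :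
      ContinuousOn (fun v => ∫ w in v..b, h w) (Icc a b) := fun s hs =>
    (hh.hasDerivWithinAt_integral_Icc_left hs).continuousWithinAt
  have hrhs : ∀ s ∈ Icc a b, HasDerivWithinAt
      (fun s => x + p * (∫ v in a..s, f v) - A * (∫ v in a..s, g v)
        - q * (∫ v in a..s, ∫ w in v..b, f w) - B * (∫ v in a..s, ∫ w in v..b, g w))
      (firstOrderRHS b p q A B f g s) (Icc a b) s := fun s hs =>
    (((((hasDerivWithinAt_const s _ x).add
      ((hf.hasDerivWithinAt_integral_Icc_right hs).const_mul p)).sub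
      ((hg.hasDerivWithinAt_integral_Icc_right hs).const_mul A)).sub
      (((tail_continuousOn hf).hasDerivWithinAt_integral_Icc_right hs).const_mul q)).sub
      (((tail_continuousOn hg).hasDerivWithinAt_integral_Icc_right hs).const_mul B)).congr_deriv
      (by rw [zero_add]; rfl)
  rw [eqOn_Icc_iff_hasDerivWithinAt hab hrhs]
  simp only [integral_same, mul_zero, add_zero, sub_zero]

theorem firstOrderEquation_iff_secondOrder (hab : a < b)
    (hf : ∀ s ∈ Icc a b, HasDerivWithinAt f (f' s) (Icc a b) s) (hf' : ContinuousOn f' (Icc a b))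
    (hg : ContinuousOn g (Icc a b)) :
    (∀ s ∈ Icc a b, HasDerivWithinAt g (firstOrderRHS b p q A B f g s) (Icc a b) s) ↔
      ContDiffOn ℝ 2 g (Icc a b) ∧
        (∀ s ∈ Icc a b, derivWithin (derivWithin g (Icc a b)) (Icc a b) s
          = p * f' s - A * derivWithin g (Icc a b) s + q * f s + B * g s) ∧
        derivWithin g (Icc a b) a = firstOrderRHS b p q A B f g a := by
  set I := Icc a b
  set F := firstOrderRHS b p q A B f g
  have hI : UniqueDiffOn ℝ I := uniqueDiffOn_Icc hab
  have hfc : ContinuousOn f I := fun s hs => (hf s hs).continuousWithinAt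
  have hF {g' : ℝ → ℝ} (hg' : ∀ s ∈ I, HasDerivWithinAt g (g' s) I s) :
      ∀ s ∈ I, HasDerivWithinAt F (p * f' s - A * g' s + q * f s + B * g s) I s :=
    fun s hs => hasDerivWithinAt_firstOrderRHS hfc hg hs (hf s hs) (hg' s hs)
  constructor
  · intro hgF
    have hderiv : EqOn (derivWithin g I) F I := fun s hs => (hgF s hs).derivWithin (hI s hs)
    have hF' := hF hgF
    have hFc : ContinuousOn F I := fun s hs => (hF' s hs).continuousWithinAt
    have hF1 : ContDiffOn ℝ 1 F I :=
      contDiffOn_succ_of_hasDerivWithinAt (n := 0) hI hF' (contDiffOn_zero.2 (by fun_prop))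
    refine ⟨contDiffOn_succ_of_hasDerivWithinAt (n := 1) hI hgF hF1, fun s hs => ?_,
      hderiv (left_mem_Icc.2 hab.le)⟩
    rw [derivWithin_congr hderiv (hderiv hs), (hF' s hs).derivWithin (hI s hs), hderiv hs]
  · rintro ⟨hC2, hODE, hderiv_a⟩
    have hg' : ∀ s ∈ I, HasDerivWithinAt g (derivWithin g I s) I s := fun s hs =>
      (hC2.differentiableOn (by norm_num) s hs).hasDerivWithinAt
    have hg'' : ∀ s ∈ I, HasDerivWithinAt (derivWithin g I)
        (p * f' s - A * derivWithin g I s + q * f s + B * g s) I s := fun s hs => by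
      rw [← hODE s hs]
      exact ((hC2.derivWithin hI (m := 1) (by norm_num)).differentiableOn (by norm_num) s
        hs).hasDerivWithinAt
    have hderiv := eqOn_Icc_of_hasDerivWithinAt_eq hg'' (hF hg') hderiv_a
    exact fun s hs => hderiv hs ▸ hg' s hs

theorem integralEquation_iff_secondOrder (hab : a < b)
    (hf : ∀ s ∈ Icc a b, HasDerivWithinAt f (f' s) (Icc a b) s) (hf' : ContinuousOn f' (Icc a b))
    (hg : ContinuousOn g (Icc a b)) :
    (∀ s ∈ Icc a b, g s = x + p * (∫ v in a..s, f v) - A * (∫ v in a..s, g v)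
        - q * (∫ v in a..s, ∫ w in v..b, f w) - B * (∫ v in a..s, ∫ w in v..b, g w)) ↔
      ContDiffOn ℝ 2 g (Icc a b) ∧
        (∀ s ∈ Icc a b, derivWithin (derivWithin g (Icc a b)) (Icc a b) s
          = p * f' s - A * derivWithin g (Icc a b) s + q * f s + B * g s) ∧
        g a = x ∧
        derivWithin g (Icc a b) a
          = p * f a - A * x - q * (∫ v in a..b, f v) - B * ∫ v in a..b, g v := by
  rw [integralEquation_iff_firstOrderEquation hab.le
      (fun s hs => (hf s hs).continuousWithinAt) hg,
    firstOrderEquation_iff_secondOrder hab hf hf' hg]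
  constructor
  · rintro ⟨rfl, hC2, hODE, hderiv_a⟩
    exact ⟨hC2, hODE, rfl, hderiv_a⟩
  · rintro ⟨hC2, hODE, rfl, hderiv_a⟩
    exact ⟨rfl, hC2, hODE, hderiv_a⟩

end IntegroDifferential

/-- Equivalence between the integral equation for `g` on `[t,T]` and the
second-order ODE boundary value problem. -/
theorem statement14 (α β σ b c : ℝ) (t T x : ℝ) (htT : t < T)
    (g : ℝ → ℝ) (hg : ContinuousOn g (Icc t T)) :
    (∀ s ∈ Icc t T,
      g s = x + α * β * (∫ v in t..s, Real.exp (-β * (v - t)))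
        - 2 * β * (∫ v in t..s, g v)
        - b * σ ^ 2 * (∫ v in t..s, (∫ v₁ in v..T, Real.exp (-β * (v₁ - t))))
        - 2 * c * σ ^ 2 * (∫ v in t..s, (∫ v₁ in v..T, g v₁)))
    ↔
    (ContDiffOn ℝ 2 g (Icc t T) ∧
      (∀ s ∈ Icc t T,
        derivWithin (derivWithin g (Icc t T)) (Icc t T) s
          = -α * β ^ 2 * Real.exp (-β * (s - t))
            - 2 * β * derivWithin g (Icc t T) s
            + b * σ ^ 2 * Real.exp (-β * (s - t))
            + 2 * c * σ ^ 2 * g s) ∧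
      g t = x ∧
      derivWithin g (Icc t T) t
        = α * β - 2 * β * x
          - b * σ ^ 2 * (∫ v₁ in t..T, Real.exp (-β * (v₁ - t)))
          - 2 * c * σ ^ 2 * (∫ v₁ in t..T, g v₁)) := by
  have hexp (s : ℝ) : HasDerivAt (fun v => Real.exp (-β * (v - t)))
      (-β * Real.exp (-β * (s - t))) s :=
    (((hasDerivAt_id s).sub_const t).const_mul (-β)).exp.congr_deriv (by simp only [id]; ring)
  rw [integralEquation_iff_secondOrder htT (fun s _ => (hexp s).hasDerivWithinAt)
    (by fun_prop) hg]
  simp only [sub_self, mul_zero, Real.exp_zero, mul_one]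
  refine and_congr_right fun _ => and_congr_left fun _ => forall₂_congr fun s _ => ?_
  rw [show α * β * (-β * Real.exp (-β * (s - t))) = -α * β ^ 2 * Real.exp (-β * (s - t)) by ring]
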